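/- Let F be a semistable rank 3 vector bundle on P^3 with c1(F) = 0 and c2(F) = n, with spectrum (k_1,...,k_n). Then F is an instanton bundle (i.e., H^0(F(-1)) = H^1(F(-2)) = H^2(F(-2)) = H^3(F(-3)) = 0) if and only if the spectrum is (0,...,0). -/
import Mathlib


open scoped BigOperators

/-!
STATEMENT 7 (Proposition `instanton1`).  A semistable rank 3 vector bundle `F` on ℙ³
with `c1 = 0`, `c2 = n` and spectrum `(k₁, …, k_n)` is an instanton bundle
(`H⁰(F(-1)) = H¹(F(-2)) = H²(F(-2)) = H³(F(-3)) = 0`) iff its spectrum is `(0, …, 0)`.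

Cohomology dimensions are modelled by `hF : ℤ → ℕ → ℕ`.  The Okonek–Spindler spectrum
`k : Fin n → ℤ` is monotone, sums to `0`, and controls
`h¹(F(l)) = Σ h⁰(O_{ℙ¹}(kᵢ + l + 1))` for `l ≤ -1` and
`h²(F(l)) = Σ h¹(O_{ℙ¹}(kᵢ + l + 1))` for `l ≥ -3`, where
`h⁰(O_{ℙ¹}(d)) = max 0 (d+1)` and `h¹(O_{ℙ¹}(d)) = max 0 (-d-1)`.
Semistability gives `h⁰(F(-1)) = 0` and, by Serre duality, `h³(F(-3)) = 0`.
-/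
theorem instanton_iff_spectrum_zero
    (n : ℕ) (hF : ℤ → ℕ → ℕ) (k : Fin n → ℤ)
    (hmono : Monotone k)
    (hsum : ∑ i, k i = 0)
    (hspec1 : ∀ l : ℤ, l ≤ -1 → (hF l 1 : ℤ) = ∑ i, max 0 (k i + l + 2))
    (hspec2 : ∀ l : ℤ, -3 ≤ l → (hF l 2 : ℤ) = ∑ i, max 0 (-(k i + l + 2)))
    (hss0 : hF (-1) 0 = 0)
    (hss3 : hF (-3) 3 = 0) :
    (hF (-1) 0 = 0 ∧ hF (-2) 1 = 0 ∧ hF (-2) 2 = 0 ∧ hF (-3) 3 = 0)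
      ↔ ∀ i, k i = 0 := by
  constructor
  · rintro ⟨-, h1, h2, -⟩ i
    have e1 := hspec1 (-2) (by norm_num)
    have e2 := hspec2 (-2) (by norm_num)
    rw [h1] at e1; rw [h2] at e2
    simp only [Nat.cast_zero] at e1 e2
    have hle : k i ≤ 0 := by
      by_contra hpos
      push_neg at hpos
      have : (0:ℤ) < ∑ j, max 0 (k j + -2 + 2) := by
        apply Finset.sum_pos' (fun j _ => le_max_left _ _)
        exact ⟨i, Finset.mem_univ i, by simp; omega⟩
      omega
    have hge : 0 ≤ k i := by
      by_contra hneg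
      push_neg at hneg
      have : (0:ℤ) < ∑ j, max 0 (-(k j + -2 + 2)) := by
        apply Finset.sum_pos' (fun j _ => le_max_left _ _)
        exact ⟨i, Finset.mem_univ i, by simp; omega⟩
      omega
    omega
  · intro hk
    refine ⟨hss0, ?_, ?_, hss3⟩
    · have e1 := hspec1 (-2) (by norm_num)
      have : (hF (-2) 1 : ℤ) = 0 := by
        rw [e1]; apply Finset.sum_eq_zero; intro i _; rw [hk i]; norm_num
      exact_mod_cast this
    · have e2 := hspec2 (-2) (by norm_num)
      have : (hF (-2) 2 : ℤ) = 0 := by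
        rw [e2]; apply Finset.sum_eq_zero; intro i _; rw [hk i]; norm_num
      exact_mod_cast this
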